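/- arXiv:1801.02541 — 3 statements merged into one kernel-verified Lean document; each statement's English description precedes it below -/
import Mathlib

section
/- Under the equal turnout hypothesis with no tied districts, the efficiency gap satisfies -1/2 ≤ EG ≤ 1/2. -/
/-- Votes wasted by a party with `x` votes against `y` in a district of turnout `t`;
in a tie both parties waste all their votes. -/
noncomputable def wastedVotes (x y t : ℝ) : ℝ :=
  if y < x then x - t / 2 else x

-- In a decided district both parties' wasted votes lie in `[0, t / 2]`.
lemma abs_wastedVotes_sub_wastedVotes_le {a b t : ℝ} (ha : 0 ≤ a) (hb : 0 ≤ b) (hab : a + b = t) :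
    |wastedVotes b a t - wastedVotes a b t| ≤ t / 2 := by
  unfold wastedVotes
  rw [abs_le]
  rcases lt_trichotomy a b with h | rfl | h
  · rw [if_pos h, if_neg h.not_gt]
    constructor <;> linarith
  · simp only [lt_irrefl, if_false, sub_self]
    constructor <;> linarith
  · rw [if_neg h.not_gt, if_pos h]
    constructor <;> linarith

lemma abs_sum_wastedVotes_sub_sum_wastedVotes_le {ι : Type*} [Fintype ι] {a b : ι → ℝ} {t : ℝ}
    (ha : ∀ i, 0 ≤ a i) (hb : ∀ i, 0 ≤ b i) (hab : ∀ i, a i + b i = t) :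
    |∑ i, wastedVotes (b i) (a i) t - ∑ i, wastedVotes (a i) (b i) t|
      ≤ Fintype.card ι * (t / 2) := by
  rw [← Finset.sum_sub_distrib]
  calc |∑ i, (wastedVotes (b i) (a i) t - wastedVotes (a i) (b i) t)|
      ≤ ∑ i, |wastedVotes (b i) (a i) t - wastedVotes (a i) (b i) t| :=
        Finset.abs_sum_le_sum_abs _ _
    _ ≤ ∑ _i : ι, t / 2 :=
        Finset.sum_le_sum fun i _ => abs_wastedVotes_sub_wastedVotes_le (ha i) (hb i) (hab i)
    _ = Fintype.card ι * (t / 2) := by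
        rw [Finset.sum_const, Finset.card_univ, nsmul_eq_mul]

theorem efficiency_gap_bounds_general
    (n : ℕ) (hn : 0 < n) (V : ℝ) (hV : 0 < V)
    (VA VB : Fin n → ℝ)
    (hnonnegA : ∀ i, 0 ≤ VA i) (hnonnegB : ∀ i, 0 ≤ VB i)
    (hturnout : ∀ i, VA i + VB i = V / n) :
    let WA : ℝ := ∑ i, (if VB i < VA i then VA i - V / n / 2 else VA i)
    let WB : ℝ := ∑ i, (if VA i < VB i then VB i - V / n / 2 else VB i)
    let EG : ℝ := (WB - WA) / V
    EG ∈ Set.Icc (-(1 / 2) : ℝ) (1 / 2) := by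
  intro WA WB EG
  have hgap : |WB - WA| ≤ V / 2 := by
    have hsum : (Fintype.card (Fin n) : ℝ) * (V / n / 2) = V / 2 := by
      rw [Fintype.card_fin]
      field_simp
    exact (abs_sum_wastedVotes_sub_sum_wastedVotes_le hnonnegA hnonnegB hturnout).trans_eq hsum
  have hEG : |EG| ≤ 1 / 2 := by
    rw [abs_div, abs_of_pos hV, div_le_iff₀ hV]
    linarith
  exact abs_le.mp hEG

/-- Under equal turnout with no tied districts, `-1/2 ≤ EG ≤ 1/2`. -/
theorem efficiency_gap_bounds
    (n : ℕ) (hn : 0 < n) (V : ℝ) (hV : 0 < V)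
    (VA VB : Fin n → ℝ)
    (hnonnegA : ∀ i, 0 ≤ VA i) (hnonnegB : ∀ i, 0 ≤ VB i)
    (hturnout : ∀ i, VA i + VB i = V / n)
    (hnotie : ∀ i, VA i ≠ VB i) :
    let WA : ℝ := ∑ i, (if VB i < VA i then VA i - V / n / 2 else VA i)
    let WB : ℝ := ∑ i, (if VA i < VB i then VB i - V / n / 2 else VB i)
    let EG : ℝ := (WB - WA) / V
    EG ∈ Set.Icc (-(1 / 2) : ℝ) (1 / 2) :=
  efficiency_gap_bounds_general n hn V hV VA VB hnonnegA hnonnegB hturnout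
end

section
/- Under equal turnout, the relative efficiency gap with λ = 1 satisfies REG_1 = (1/2)·(S_m - V_m)/((1/2 + V_m)(1/2 - V_m)), provided both parties receive at least one vote. -/
/-!
Writing `a`, `b` for the two parties' vote totals and `S` for the number of districts `A` wins,
the no-tie condition makes `B` win the other `n - S` districts, so the wasted votes are
`W^A = a - S V / (2n)` and `W^B = b - (n - S) V / (2n)`. Since `a + b = V`, the relative gap
`W^B / b - W^A / a = V / (2n) · (S / a - (n - S) / b)` collapses to the stated rational
expression in `S_m` and `V_m`.
-/

open Finset

theorem Finset.sum_ite_sub_const {ι M : Type*} [AddCommGroup M] (s : Finset ι) (p : ι → Prop)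
    [DecidablePred p] (f : ι → M) (c : M) :
    ∑ i ∈ s, (if p i then f i - c else f i) = ∑ i ∈ s, f i - #(s.filter p) • c := by
  have hsplit (i : ι) : (if p i then f i - c else f i) = f i - if p i then c else 0 := by
    split_ifs <;> simp
  rw [sum_congr rfl fun i _ => hsplit i, sum_sub_distrib, ← sum_filter, sum_const]

theorem Finset.card_filter_lt_add_card_filter_gt {ι α : Type*} [LinearOrder α] (s : Finset ι)
    (f g : ι → α) (hne : ∀ i ∈ s, f i ≠ g i) :
    #(s.filter fun i => f i < g i) + #(s.filter fun i => g i < f i) = #s := by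
  rw [← card_filter_add_card_filter_not (s := s) (p := fun i => g i < f i), add_comm]
  congr 2
  refine filter_congr fun i hi => ?_
  rw [not_lt]
  exact ⟨le_of_lt, fun h => h.lt_of_ne (hne i hi)⟩

theorem relative_efficiency_gap_of_totals {a b S N V : ℝ} (ha : 0 < a) (hb : 0 < b)
    (hN : N ≠ 0) (hV : a + b = V) :
    (b - (N - S) * (V / N / 2)) / b - (a - S * (V / N / 2)) / a =
      1 / 2 * ((S / N - 1 / 2 - (a / V - 1 / 2)) /
        ((1 / 2 + (a / V - 1 / 2)) * (1 / 2 - (a / V - 1 / 2)))) := by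
  subst hV
  have hbV : 1 / 2 - (a / (a + b) - 1 / 2) = b / (a + b) := by field_simp; ring
  rw [hbV]
  field_simp
  ring

theorem relative_efficiency_gap_one_formula_general
    (n : ℕ) (V : ℝ)
    (VA VB : Fin n → ℝ)
    (hturnout : ∀ i, VA i + VB i = V / n)
    (hnotie : ∀ i, VA i ≠ VB i)
    (hApos : 0 < ∑ i, VA i) (hBpos : 0 < ∑ i, VB i) :
    let WA : ℝ := ∑ i, (if VB i < VA i then VA i - V / n / 2 else VA i)
    let WB : ℝ := ∑ i, (if VA i < VB i then VB i - V / n / 2 else VB i)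
    let REG : ℝ := WB / (∑ i, VB i) - WA / (∑ i, VA i)
    let Sm : ℝ := ((Finset.univ.filter fun i => VB i < VA i).card : ℝ) / n - 1 / 2
    let Vm : ℝ := (∑ i, VA i) / V - 1 / 2
    REG = (1 / 2) * ((Sm - Vm) / ((1 / 2 + Vm) * (1 / 2 - Vm))) := by
  intro WA WB REG Sm Vm
  have hn : (n : ℝ) ≠ 0 := by
    rintro hn
    obtain rfl : n = 0 := by exact_mod_cast hn
    simp at hApos
  have htotal : ∑ i, VA i + ∑ i, VB i = V := by
    rw [← sum_add_distrib, Fintype.sum_congr _ _ hturnout, sum_const, card_univ,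
      Fintype.card_fin, nsmul_eq_mul, mul_div_cancel₀ _ hn]
  have hwinsB : (#(univ.filter fun i => VA i < VB i) : ℝ) =
      n - #(univ.filter fun i => VB i < VA i) := by
    rw [eq_sub_iff_add_eq]
    exact_mod_cast (card_filter_lt_add_card_filter_gt univ VA VB fun i _ => hnotie i).trans
      (card_fin n)
  simp only [REG, WA, WB, Sm, Vm, sum_ite_sub_const, nsmul_eq_mul, hwinsB]
  exact relative_efficiency_gap_of_totals hApos hBpos hn htotal

/-- Under equal turnout, the relative efficiency gap with λ = 1 satisfies
`REG_1 = (1/2) * (S_m - V_m) / ((1/2 + V_m) * (1/2 - V_m))`. -/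
theorem relative_efficiency_gap_one_formula
    (n : ℕ) (hn : 0 < n) (V : ℝ) (hV : 0 < V)
    (VA VB : Fin n → ℝ)
    (hnonnegA : ∀ i, 0 ≤ VA i) (hnonnegB : ∀ i, 0 ≤ VB i)
    (hturnout : ∀ i, VA i + VB i = V / n)
    (hnotie : ∀ i, VA i ≠ VB i)
    (hApos : 0 < ∑ i, VA i) (hBpos : 0 < ∑ i, VB i) :
    let WA : ℝ := ∑ i, (if VB i < VA i then VA i - V / n / 2 else VA i)
    let WB : ℝ := ∑ i, (if VA i < VB i then VB i - V / n / 2 else VB i)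
    let REG : ℝ := WB / (∑ i, VB i) - WA / (∑ i, VA i)
    let Sm : ℝ := ((Finset.univ.filter fun i => VB i < VA i).card : ℝ) / n - 1 / 2
    let Vm : ℝ := (∑ i, VA i) / V - 1 / 2
    REG = (1 / 2) * ((Sm - Vm) / ((1 / 2 + Vm) * (1 / 2 - Vm))) :=
  relative_efficiency_gap_one_formula_general n V VA VB hturnout hnotie hApos hBpos
end

section
/- Under equal turnout, REG_2 = 0 if and only if S_m = (2 - C)·V_m, where C is mean competitiveness; thus the λ=2 relative efficiency gap vanishing interpolates between proportionality (C = 1) and the winner's double bonus (C = 0). -/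
/-!
Let `X` be the votes B casts in districts it loses and `Y` those A casts in districts it loses.
With turnout `t` in every district, doubling a winner's excess over `t / 2` turns its vote `a`
into the margin `a - b`, so `W^A = V^A - X`, `W^B = V^B - Y` and `REG_2 = X / V^A - Y / V^B`.
Since also `C V = V - 2 (X + Y)` and `V^A = (seats of A) t - X + Y`, one finds
`S_m - (2 - C) V_m = 2 (X V^B - Y V^A) / V²`, which is `REG_2` times the positive factor
`2 (1/2 + V_m)(1/2 - V_m) = 2 V^A V^B / V²`.
-/

open Finset

section Districts

variable {ι : Type*} [Fintype ι] {a b : ι → ℝ} {t : ℝ}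

noncomputable def lostVotes (a b : ι → ℝ) : ℝ :=
  ∑ i, if a i < b i then a i else 0

theorem sum_doubleWinnerExcess_eq (hturnout : ∀ i, a i + b i = t) :
    ∑ i, (if b i < a i then 2 * (a i - t / 2) else a i) = ∑ i, a i - lostVotes b a := by
  rw [lostVotes, ← sum_sub_distrib]
  refine sum_congr rfl fun i _ => ?_
  split_ifs
  · linarith [hturnout i]
  · ring

theorem sum_add_sum_eq_card_mul (hturnout : ∀ i, a i + b i = t) :
    ∑ i, a i + ∑ i, b i = Fintype.card ι * t := by
  simp only [← sum_add_distrib, hturnout, sum_const, card_univ, nsmul_eq_mul]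

theorem sum_abs_sub_eq (hturnout : ∀ i, a i + b i = t) (hnotie : ∀ i, a i ≠ b i) :
    ∑ i, |a i - b i| = Fintype.card ι * t - 2 * (lostVotes b a + lostVotes a b) := by
  have hdistrict : ∀ i, |a i - b i| =
      t - 2 * ((if b i < a i then b i else 0) + if a i < b i then a i else 0) := by
    intro i
    rcases (hnotie i).lt_or_gt with h | h
    · rw [abs_of_neg (sub_neg.mpr h), if_pos h, if_neg h.not_gt]
      linarith [hturnout i]
    · rw [abs_of_pos (sub_pos.mpr h), if_neg h.not_gt, if_pos h]
      linarith [hturnout i]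
  simp only [hdistrict, sum_sub_distrib, ← mul_sum, sum_add_distrib, sum_const, card_univ,
    nsmul_eq_mul, lostVotes]

theorem sum_eq_card_won_mul_sub_add (hturnout : ∀ i, a i + b i = t) (hnotie : ∀ i, a i ≠ b i) :
    ∑ i, a i = #{i | b i < a i} * t - lostVotes b a + lostVotes a b := by
  have hdistrict : ∀ i, a i =
      (if b i < a i then t else 0) - (if b i < a i then b i else 0) +
        if a i < b i then a i else 0 := by
    intro i
    rcases (hnotie i).lt_or_gt with h | h
    · simp [h, h.not_gt]
    · simp only [h, h.not_gt, if_true, if_false]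
      linarith [hturnout i]
  conv_lhs => rw [sum_congr rfl fun i _ => hdistrict i]
  rw [sum_add_distrib, sum_sub_distrib, ← sum_filter, sum_const, nsmul_eq_mul, lostVotes,
    lostVotes]

end Districts

theorem relativeGap_two_eq_div {V TA TB X Y s n : ℝ} (hV : V ≠ 0) (hn : n ≠ 0) (hTA : TA ≠ 0)
    (hTB : TB ≠ 0) (hsum : TA + TB = V) (hseats : TA = s * (V / n) - X + Y) :
    (TB - Y) / TB - (TA - X) / TA =
      (s / n - 1 / 2 - (2 - (V - 2 * (X + Y)) / V) * (TA / V - 1 / 2)) /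
        (2 * (TA / V) * (TB / V)) := by
  have hseats' : s / n = (TA + X - Y) / V := by
    field_simp at hseats ⊢
    linear_combination -hseats
  rw [hseats', ← hsum]
  rw [← hsum] at hV
  field_simp
  ring

theorem relative_efficiency_gap_two_vanishes_iff_general
    (n : ℕ) (hn : 0 < n) (V : ℝ) (hV : 0 < V)
    (VA VB : Fin n → ℝ)
    (hturnout : ∀ i, VA i + VB i = V / n)
    (hnotie : ∀ i, VA i ≠ VB i)
    (hApos : 0 < ∑ i, VA i) (hBpos : 0 < ∑ i, VB i) :
    let WA : ℝ := ∑ i, (if VB i < VA i then 2 * (VA i - V / n / 2) else VA i)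
    let WB : ℝ := ∑ i, (if VA i < VB i then 2 * (VB i - V / n / 2) else VB i)
    let REG : ℝ := WB / (∑ i, VB i) - WA / (∑ i, VA i)
    let Sm : ℝ := ((Finset.univ.filter fun i => VB i < VA i).card : ℝ) / n - 1 / 2
    let Vm : ℝ := (∑ i, VA i) / V - 1 / 2
    let C : ℝ := (∑ i, |VA i - VB i| / (V / n)) / n
    (REG = 0 ↔ Sm = (2 - C) * Vm) := by
  intro WA WB REG Sm Vm C
  have hn' : (n : ℝ) ≠ 0 := by positivity
  have hturnoutB : ∀ i, VB i + VA i = V / n := fun i => (add_comm _ _).trans (hturnout i)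
  have hsum : ∑ i, VA i + ∑ i, VB i = V := by
    rw [sum_add_sum_eq_card_mul hturnout, Fintype.card_fin]
    field_simp
  have hC : C = (V - 2 * (lostVotes VB VA + lostVotes VA VB)) / V := by
    simp only [C, ← sum_div, sum_abs_sub_eq hturnout hnotie, Fintype.card_fin]
    field_simp
  have hREG : REG = (Sm - (2 - C) * Vm) / (2 * ((∑ i, VA i) / V) * ((∑ i, VB i) / V)) := by
    simp only [REG, WA, WB, sum_doubleWinnerExcess_eq hturnout, sum_doubleWinnerExcess_eq hturnoutB,
      hC]
    exact relativeGap_two_eq_div hV.ne' hn' hApos.ne' hBpos.ne' hsum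
      (sum_eq_card_won_mul_sub_add hturnout hnotie)
  rw [hREG, div_eq_zero_iff, or_iff_left (by positivity), sub_eq_zero]

/-- Under equal turnout, `REG_2 = 0` if and only if `S_m = (2 - C) * V_m`:
the λ = 2 relative efficiency gap vanishing interpolates between
proportionality (C = 1) and the winner's double bonus (C = 0). -/
theorem relative_efficiency_gap_two_vanishes_iff
    (n : ℕ) (hn : 0 < n) (V : ℝ) (hV : 0 < V)
    (VA VB : Fin n → ℝ)
    (hnonnegA : ∀ i, 0 ≤ VA i) (hnonnegB : ∀ i, 0 ≤ VB i)
    (hturnout : ∀ i, VA i + VB i = V / n)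
    (hnotie : ∀ i, VA i ≠ VB i)
    (hApos : 0 < ∑ i, VA i) (hBpos : 0 < ∑ i, VB i) :
    let WA : ℝ := ∑ i, (if VB i < VA i then 2 * (VA i - V / n / 2) else VA i)
    let WB : ℝ := ∑ i, (if VA i < VB i then 2 * (VB i - V / n / 2) else VB i)
    let REG : ℝ := WB / (∑ i, VB i) - WA / (∑ i, VA i)
    let Sm : ℝ := ((Finset.univ.filter fun i => VB i < VA i).card : ℝ) / n - 1 / 2
    let Vm : ℝ := (∑ i, VA i) / V - 1 / 2
    let C : ℝ := (∑ i, |VA i - VB i| / (V / n)) / n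
    (REG = 0 ↔ Sm = (2 - C) * Vm) :=
  relative_efficiency_gap_two_vanishes_iff_general n hn V hV VA VB hturnout hnotie hApos hBpos
end
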